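/- arXiv:2102.05320 — 2 statements merged into one kernel-verified Lean document; each statement's English description precedes it below -/
import Mathlib

section
/- Let B be a d×d real matrix, G an m×d real matrix such that G Gᵀ is invertible, and let g ∈ ℝᵈ, c ∈ ℝᵐ, M a d×m real matrix, and μ, ν ∈ ℝ. Suppose Δx ∈ ℝᵈ and λ̂ ∈ ℝᵐ satisfy B Δx + Gᵀ λ̂ = −g and G Δx = −c, and Δλ ∈ ℝᵐ satisfies G Gᵀ Δλ = −(G g + Mᵀ Δx). Then ((I + ν M G) g + μ Gᵀ c) ⬝ Δx + (c + ν G Gᵀ G g) ⬝ Δλ = −Δxᵀ B Δx + c ⬝ (Δλ + λ̂) − μ ‖c‖² − ν ‖G g‖². -/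
open Matrix

private lemma mulVec_dot {m n : ℕ} (A : Matrix (Fin m) (Fin n) ℝ)
    (u : Fin n → ℝ) (v : Fin m → ℝ) :
    (A *ᵥ u) ⬝ᵥ v = u ⬝ᵥ (Aᵀ *ᵥ v) := by
  rw [dotProduct_comm, Matrix.dotProduct_mulVec, Matrix.mulVec_transpose, dotProduct_comm]

theorem sqp_augmented_lagrangian_directional_derivative {d m : ℕ}
    (B : Matrix (Fin d) (Fin d) ℝ) (G : Matrix (Fin m) (Fin d) ℝ)
    (_hGG : Invertible (G * Gᵀ))
    (g : Fin d → ℝ) (c : Fin m → ℝ) (M : Matrix (Fin d) (Fin m) ℝ)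
    (μ ν : ℝ) (Δx : Fin d → ℝ) (lamhat Δlam : Fin m → ℝ)
    (h1 : B *ᵥ Δx + Gᵀ *ᵥ lamhat = -g)
    (h2 : G *ᵥ Δx = -c)
    (h3 : (G * Gᵀ) *ᵥ Δlam = -(G *ᵥ g + Mᵀ *ᵥ Δx)) :
    (((1 + ν • (M * G)) *ᵥ g) + μ • (Gᵀ *ᵥ c)) ⬝ᵥ Δx
      + (c + ν • ((G * Gᵀ) *ᵥ (G *ᵥ g))) ⬝ᵥ Δlam
    = -(Δx ⬝ᵥ (B *ᵥ Δx)) + c ⬝ᵥ (Δlam + lamhat)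
      - μ * (c ⬝ᵥ c) - ν * ((G *ᵥ g) ⬝ᵥ (G *ᵥ g)) := by
  have key1 : ((M * G) *ᵥ g) ⬝ᵥ Δx = (G *ᵥ g) ⬝ᵥ (Mᵀ *ᵥ Δx) := by
    rw [← Matrix.mulVec_mulVec, mulVec_dot]
  have key2 : ((G * Gᵀ) *ᵥ (G *ᵥ g)) ⬝ᵥ Δlam
      = -((G *ᵥ g) ⬝ᵥ (G *ᵥ g)) - (G *ᵥ g) ⬝ᵥ (Mᵀ *ᵥ Δx) := by
    rw [mulVec_dot, Matrix.transpose_mul, Matrix.transpose_transpose, h3]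
    simp [dotProduct_add]; ring
  have key3 : (Gᵀ *ᵥ c) ⬝ᵥ Δx = -(c ⬝ᵥ c) := by
    rw [mulVec_dot, Matrix.transpose_transpose, h2]; simp
  have e1 : (B *ᵥ Δx + Gᵀ *ᵥ lamhat) ⬝ᵥ Δx = (-g) ⬝ᵥ Δx := by rw [h1]
  have key4 : (Gᵀ *ᵥ lamhat) ⬝ᵥ Δx = -(c ⬝ᵥ lamhat) := by
    rw [mulVec_dot, Matrix.transpose_transpose, h2]; simp [dotProduct_comm]
  have key5 : g ⬝ᵥ Δx = -((B *ᵥ Δx) ⬝ᵥ Δx) + c ⬝ᵥ lamhat := by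
    simp only [add_dotProduct, neg_dotProduct, key4] at e1; linarith
  have key6 : (B *ᵥ Δx) ⬝ᵥ Δx = Δx ⬝ᵥ (B *ᵥ Δx) := dotProduct_comm _ _
  simp only [add_mulVec, one_mulVec, smul_mulVec, add_dotProduct, smul_dotProduct,
    dotProduct_add, smul_eq_mul, key1, key2, key3, key5, key6]
  ring
end

section
/- Let r > 0, T ∈ ℝ, and let (sₖ) be a sequence in {0,1}. Let (φₖ) be a real sequence and set ψ₀ := φ₀, such that for every k: (i) if sₖ = 1 and φₖ ≤ T then φ_{k+1} ≥ min(A, φₖ + r) for some fixed A ≥ T; (ii) if φₖ > T then φₖ ≥ T + r and φ_{k+1} ≥ φₖ − r; (iii) if sₖ = 0 and φₖ ≤ T then φ_{k+1} ≥ φₖ − r. Define ψ_{k+1} = min(T, ψₖ + r) if sₖ = 1 and ψ_{k+1} = ψₖ − r if sₖ = 0. Then φₖ ≥ ψₖ for all k. -/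
theorem log_stepsize_dominates_capped_walk (r T A : ℝ) (hr : 0 < r) (hTA : T ≤ A)
    (s : ℕ → Bool) (φ ψ : ℕ → ℝ)
    (h1 : ∀ k, s k = true → φ k ≤ T → min A (φ k + r) ≤ φ (k + 1))
    (h2 : ∀ k, T < φ k → T + r ≤ φ k ∧ φ k - r ≤ φ (k + 1))
    (h3 : ∀ k, s k = false → φ k ≤ T → φ k - r ≤ φ (k + 1))
    (hψ0 : ψ 0 = φ 0)
    (hψ : ∀ k, ψ (k + 1) = if s k then min T (ψ k + r) else ψ k - r) :
    ∀ k, ψ k ≤ φ k := by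
  intro k
  induction k with
  | zero => exact le_of_eq hψ0
  | succ k ih =>
    rw [hψ k]
    cases hs : s k with
    | false =>
      simp only [Bool.false_eq_true, if_false]
      rcases le_or_gt (φ k) T with hT | hT
      · linarith [h3 k hs hT]
      · linarith [(h2 k hT).2]
    | true =>
      simp only [if_true]
      rcases le_or_gt (φ k) T with hT | hT
      · have := h1 k hs hT
        have : min T (ψ k + r) ≤ min A (φ k + r) :=
          le_min (le_trans (min_le_left _ _) hTA)
            (le_trans (min_le_right _ _) (by linarith))
        linarith [h1 k hs hT]
      · have h := h2 k hT
        have : min T (ψ k + r) ≤ T := min_le_left _ _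
        linarith [h.1, h.2]
end
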